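/- arXiv:2109.02493 — 4 statements merged into one kernel-verified Lean document; each statement's English description precedes it below -/
import Mathlib

section
/- Let d ≥ 1, δ > 0 and let μ, ν be Borel probability measures on ℝ^d belonging to P_log(ℝ^d). Then D_δ(μ,ν) ≤ ( D̃_δ(μ,ν) / log 2 )^{1/2} + D̃_δ(μ,ν). -/
open MeasureTheory ENNReal Filter
open scoped Topology

noncomputable section

abbrev Euc (d : ℕ) := EuclideanSpace ℝ (Fin d)

/-- The set of couplings of two measures on `Euc d`: probability measures on the product
whose first and second marginals are `μ` and `ν` respectively. -/
def couplings {d : ℕ} (μ ν : Measure (Euc d)) : Set (Measure (Euc d × Euc d)) :=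
  {π | IsProbabilityMeasure π ∧ π.map Prod.fst = μ ∧ π.map Prod.snd = ν}

/-- Kantorovich–Rubinstein functional `D̃_δ` with cost `log(|x-y|²/δ² + 1)`. -/
def KRt (d : ℕ) (δ : ℝ) (μ ν : Measure (Euc d)) : ℝ≥0∞ :=
  ⨅ π ∈ couplings μ ν,
    ∫⁻ p, ENNReal.ofReal (Real.log (‖p.1 - p.2‖ ^ 2 / δ ^ 2 + 1)) ∂π

/-- Kantorovich–Rubinstein functional `D_δ` with cost `log(|x-y|/δ + 1)`. -/
def KR (d : ℕ) (δ : ℝ) (μ ν : Measure (Euc d)) : ℝ≥0∞ :=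
  ⨅ π ∈ couplings μ ν,
    ∫⁻ p, ENNReal.ofReal (Real.log (‖p.1 - p.2‖ / δ + 1)) ∂π

/-- `μ ∈ P_log(ℝ^d)`: finite logarithmic moment. -/
def Plog {d : ℕ} (μ : Measure (Euc d)) : Prop :=
  ∫⁻ x, ENNReal.ofReal (Real.log (1 + ‖x‖)) ∂μ < ⊤

/-! Write `s = |x - y| / δ`. For `s ≤ 1`, `log (s + 1) ≤ s` and, by concavity of `log`,
`s² log 2 ≤ log (s² + 1)`, so `log (s + 1) ≤ √(log (s² + 1) / log 2)`; for `s > 1`,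
`log (s + 1) ≤ log (s² + 1)`. Integrating against a coupling and applying Jensen's inequality to
the square root bounds its `D_δ`-cost by `φ` of its `D̃_δ`-cost, where `φ x = √(x / log 2) + x`.
Since `φ` is monotone and continuous, it commutes with the infimum over couplings. -/

namespace Real

lemma mul_log_two_le_log_add_one {x : ℝ} (h0 : 0 ≤ x) (h1 : x ≤ 1) :
    x * log 2 ≤ log (x + 1) := by
  have h : (2 : ℝ) ^ x ≤ x + 1 := by
    simpa [one_add_one_eq_two, add_comm] using
      rpow_one_add_le_one_add_mul_self (s := 1) (by norm_num) h0 h1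
  rw [← log_rpow two_pos]
  exact log_le_log (by positivity) h

lemma log_add_one_le_sqrt_add {s : ℝ} (hs : 0 ≤ s) :
    log (s + 1) ≤ √(log (s ^ 2 + 1) / log 2) + log (s ^ 2 + 1) := by
  have hlog : 0 ≤ log (s ^ 2 + 1) := log_nonneg (by nlinarith)
  rcases le_or_gt s 1 with h1 | h1
  · have hsq : s ^ 2 ≤ log (s ^ 2 + 1) / log 2 := by
      rw [le_div_iff₀ (log_pos one_lt_two)]
      exact mul_log_two_le_log_add_one (by positivity) (by nlinarith)
    calc log (s + 1) ≤ s := by linarith [log_le_sub_one_of_pos (by linarith : 0 < s + 1)]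
      _ = √(s ^ 2) := (sqrt_sq hs).symm
      _ ≤ √(log (s ^ 2 + 1) / log 2) := sqrt_le_sqrt hsq
      _ ≤ _ := le_add_of_nonneg_right hlog
  · calc log (s + 1) ≤ log (s ^ 2 + 1) := log_le_log (by linarith) (by nlinarith)
      _ ≤ _ := le_add_of_nonneg_left (sqrt_nonneg _)

end Real

lemma lintegral_rpow_le_rpow_lintegral {α : Type*} [MeasurableSpace α] (μ : Measure α)
    [IsProbabilityMeasure μ] {f : α → ℝ≥0∞} (hf : AEMeasurable f μ) {p : ℝ} (hp0 : 0 < p)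
    (hp1 : p ≤ 1) :
    ∫⁻ a, f a ^ p ∂μ ≤ (∫⁻ a, f a ∂μ) ^ p := by
  have h := eLpNorm'_le_eLpNorm'_of_exponent_le one_pos (one_le_one_div hp0 hp1) μ
    (hf.pow_const p).aestronglyMeasurable
  simpa [eLpNorm', ← ENNReal.rpow_mul, hp0.ne'] using h

lemma lintegral_log_add_one_le {α : Type*} [MeasurableSpace α] (μ : Measure α)
    [IsProbabilityMeasure μ] {f : α → ℝ} (hf : Measurable f) (hf0 : ∀ a, 0 ≤ f a) :
    ∫⁻ a, ENNReal.ofReal (Real.log (f a + 1)) ∂μ ≤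
      ((∫⁻ a, ENNReal.ofReal (Real.log (f a ^ 2 + 1)) ∂μ) / ENNReal.ofReal (Real.log 2))
        ^ ((1 : ℝ) / 2) + ∫⁻ a, ENNReal.ofReal (Real.log (f a ^ 2 + 1)) ∂μ := by
  set c := ENNReal.ofReal (Real.log 2)
  set L : α → ℝ≥0∞ := fun a => ENNReal.ofReal (Real.log (f a ^ 2 + 1))
  have hL : Measurable L := by fun_prop
  have hc : c⁻¹ ≠ ⊤ := ENNReal.inv_ne_top.mpr (by simp [c, Real.log_pos one_lt_two])
  have hpointwise :
      ∀ a, ENNReal.ofReal (Real.log (f a + 1)) ≤ (L a / c) ^ ((1 : ℝ) / 2) + L a := by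
    intro a
    have hlog : 0 ≤ Real.log (f a ^ 2 + 1) := Real.log_nonneg (by nlinarith)
    calc ENNReal.ofReal (Real.log (f a + 1))
        ≤ ENNReal.ofReal (√(Real.log (f a ^ 2 + 1) / Real.log 2) + Real.log (f a ^ 2 + 1)) :=
          ENNReal.ofReal_le_ofReal (Real.log_add_one_le_sqrt_add (hf0 a))
      _ = (L a / c) ^ ((1 : ℝ) / 2) + L a := by
          rw [ENNReal.ofReal_add (Real.sqrt_nonneg _) hlog, Real.sqrt_eq_rpow,
            ← ENNReal.ofReal_rpow_of_nonneg (by positivity) (by norm_num),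
            ENNReal.ofReal_div_of_pos (Real.log_pos one_lt_two)]
  calc ∫⁻ a, ENNReal.ofReal (Real.log (f a + 1)) ∂μ
      ≤ ∫⁻ a, ((L a / c) ^ ((1 : ℝ) / 2) + L a) ∂μ := lintegral_mono hpointwise
    _ = ∫⁻ a, (L a / c) ^ ((1 : ℝ) / 2) ∂μ + ∫⁻ a, L a ∂μ :=
        lintegral_add_right _ hL
    _ ≤ (∫⁻ a, L a / c ∂μ) ^ ((1 : ℝ) / 2) + ∫⁻ a, L a ∂μ := by
        gcongr
        exact lintegral_rpow_le_rpow_lintegral μ (hL.div_const c).aemeasurable (by norm_num)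
          (by norm_num)
    _ = _ := by simp only [div_eq_mul_inv, lintegral_mul_const' _ _ hc]

lemma Monotone.map_iInf₂_of_continuous {α β : Type*} [CompleteLinearOrder α]
    [TopologicalSpace α] [OrderTopology α] [CompleteLinearOrder β] [TopologicalSpace β]
    [OrderClosedTopology β] {ι : Sort*} {κ : ι → Sort*} {f : α → β} {g : ∀ i, κ i → α}
    (Mf : Monotone f) (Cf : Continuous f) (ftop : f ⊤ = ⊤) :
    f (⨅ i, ⨅ j, g i j) = ⨅ i, ⨅ j, f (g i j) := by
  rw [Mf.map_iInf_of_continuousAt Cf.continuousAt ftop]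
  exact iInf_congr fun i => Mf.map_iInf_of_continuousAt Cf.continuousAt ftop

theorem KR_le_sqrt_KRt_add_KRt_general (d : ℕ) (δ : ℝ) (hδ : 0 < δ)
    (μ ν : Measure (Euc d)) :
    KR d δ μ ν ≤ (KRt d δ μ ν / ENNReal.ofReal (Real.log 2)) ^ ((1 : ℝ) / 2)
      + KRt d δ μ ν := by
  set φ : ℝ≥0∞ → ℝ≥0∞ := fun x => (x / ENNReal.ofReal (Real.log 2)) ^ ((1 : ℝ) / 2) + x
  have hφ_mono : Monotone φ := fun x y hxy => by dsimp only [φ]; gcongr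
  have hφ_cont : Continuous φ :=
    (ENNReal.continuous_rpow_const.comp
      (ENNReal.continuous_div_const _ (by simp [Real.log_pos one_lt_two]))).add continuous_id
  have hφ_top : φ ⊤ = ⊤ := by simp [φ]
  calc KR d δ μ ν
      ≤ ⨅ π ∈ couplings μ ν,
          φ (∫⁻ p, ENNReal.ofReal (Real.log (‖p.1 - p.2‖ ^ 2 / δ ^ 2 + 1)) ∂π) := by
        refine iInf₂_mono fun π hπ => ?_
        have := hπ.1
        simpa only [div_pow] using lintegral_log_add_one_le π
          (f := fun p => ‖p.1 - p.2‖ / δ) (by fun_prop) fun p => by positivity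
    _ = φ (KRt d δ μ ν) := (hφ_mono.map_iInf₂_of_continuous hφ_cont hφ_top).symm

/-- For probability measures `μ, ν ∈ P_log(ℝ^d)` and `δ > 0`,
`D_δ(μ,ν) ≤ (D̃_δ(μ,ν)/log 2)^{1/2} + D̃_δ(μ,ν)`. -/
theorem KR_le_sqrt_KRt_add_KRt (d : ℕ) (hd : 1 ≤ d) (δ : ℝ) (hδ : 0 < δ)
    (μ ν : Measure (Euc d)) (hμp : IsProbabilityMeasure μ) (hνp : IsProbabilityMeasure ν)
    (hμ : Plog μ) (hν : Plog ν) :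
    KR d δ μ ν ≤ (KRt d δ μ ν / ENNReal.ofReal (Real.log 2)) ^ ((1 : ℝ) / 2)
      + KRt d δ μ ν :=
  KR_le_sqrt_KRt_add_KRt_general d δ hδ μ ν

end
end

section
/- Let d ≥ 1 and let μ, ν be Borel probability measures on ℝ^d belonging to P_log(ℝ^d). If lim_{δ → 0⁺} D̃_δ(μ,ν) / |log δ| = 0, then μ = ν. -/
open MeasureTheory ENNReal Filter
open scoped Topology

noncomputable section

/-! On pairs at distance at least `e` the cost `log (|x - y|² / δ² + 1)` is at least `|log δ|`
once `δ ≤ e²`, so by Markov's inequality a coupling nearly attaining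
`D̃_δ(μ,ν) = o(|log δ|)` puts mass less than `e` on `{|x - y| ≥ e}`. Such a coupling gives
`μ B ≤ ν (thickening e B) + e` for every Borel set `B`; hence the Lévy–Prokhorov distance
between `μ` and `ν` vanishes, and `μ = ν`. -/

open Set Metric

section LevyProkhorov

variable {Ω : Type*} [PseudoMetricSpace Ω] [MeasurableSpace Ω]

lemma measure_le_measure_thickening_add_of_map [OpensMeasurableSpace Ω]
    {μ ν : Measure Ω} {π : Measure (Ω × Ω)} (hπμ : π.map Prod.fst = μ)
    (hπν : π.map Prod.snd = ν) {B : Set Ω} (hB : MeasurableSet B) (e : ℝ) :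
    μ B ≤ ν (thickening e B) + π {p | e ≤ dist p.1 p.2} := by
  subst hπμ hπν
  rw [Measure.map_apply measurable_fst hB,
    Measure.map_apply measurable_snd isOpen_thickening.measurableSet]
  refine (measure_mono fun p hp => ?_).trans (measure_union_le _ _)
  rcases le_or_gt e (dist p.1 p.2) with hfar | hnear
  · exact Or.inr hfar
  · exact Or.inl (mem_thickening_iff.2 ⟨p.1, hp, by rwa [dist_comm]⟩)

lemma eq_of_forall_measure_le_measure_thickening_add [BorelSpace Ω]
    (μ ν : Measure Ω) [IsProbabilityMeasure μ] [IsProbabilityMeasure ν]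
    (h : ∀ ε > 0, ∀ B, MeasurableSet B → μ B ≤ ν (thickening ε B) + ENNReal.ofReal ε) :
    μ = ν := by
  let P : LevyProkhorov (ProbabilityMeasure Ω) := .ofMeasure ⟨μ, inferInstance⟩
  let Q : LevyProkhorov (ProbabilityMeasure Ω) := .ofMeasure ⟨ν, inferInstance⟩
  have hPQ : dist P Q ≤ 0 :=
    levyProkhorovDist_le_of_forall_le μ ν le_rfl fun ε B hε hB => h ε hε B hB
  exact congrArg (fun R : LevyProkhorov (ProbabilityMeasure Ω) => (R.toMeasure : Measure Ω))
    (dist_le_zero.1 hPQ)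

end LevyProkhorov

lemma neg_log_le_log_sq_div_sq_add_one {δ e r : ℝ} (hδ : 0 < δ) (hδe : δ ≤ e ^ 2)
    (he : 0 ≤ e) (her : e ≤ r) : -Real.log δ ≤ Real.log (r ^ 2 / δ ^ 2 + 1) := by
  rw [← Real.log_inv]
  refine Real.log_le_log (inv_pos.2 hδ) ?_
  have hδr : δ ≤ r ^ 2 := hδe.trans (pow_le_pow_left₀ he her 2)
  calc δ⁻¹ = δ / δ ^ 2 := by field_simp
    _ ≤ r ^ 2 / δ ^ 2 := by gcongr
    _ ≤ r ^ 2 / δ ^ 2 + 1 := le_add_of_nonneg_right zero_le_one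

lemma measure_dist_ge_mul_le_lintegral_log {E : Type*} [NormedAddCommGroup E]
    [MeasurableSpace E] [BorelSpace E] [SecondCountableTopology E] (π : Measure (E × E))
    {δ e : ℝ} (hδ : 0 < δ) (hδe : δ ≤ e ^ 2) (he : 0 ≤ e) :
    π {p | e ≤ dist p.1 p.2} * ENNReal.ofReal (-Real.log δ) ≤
      ∫⁻ p, ENNReal.ofReal (Real.log (‖p.1 - p.2‖ ^ 2 / δ ^ 2 + 1)) ∂π := by
  rw [mul_comm]
  refine le_trans (mul_le_mul_right (measure_mono fun p hp => ?_) _)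
    (mul_meas_ge_le_lintegral₀ (by fun_prop) _)
  exact ENNReal.ofReal_le_ofReal
    (neg_log_le_log_sq_div_sq_add_one hδ hδe he (hp.trans_eq (dist_eq_norm _ _)))

lemma exists_coupling_measure_dist_ge_lt_of_KRt_div_lt {d : ℕ} {μ ν : Measure (Euc d)}
    {δ e : ℝ} {c : ℝ≥0∞} (hδ : 0 < δ) (hδ1 : δ < 1) (hδe : δ ≤ e ^ 2) (he : 0 ≤ e)
    (hK : KRt d δ μ ν / ENNReal.ofReal |Real.log δ| < c) :
    ∃ π ∈ couplings μ ν, π {p | e ≤ dist p.1 p.2} < c := by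
  have hlog : Real.log δ < 0 := Real.log_neg hδ hδ1
  have hL0 : ENNReal.ofReal (-Real.log δ) ≠ 0 := by simpa using hlog
  rw [abs_of_neg hlog, ENNReal.div_lt_iff (Or.inl hL0) (Or.inl ofReal_ne_top), KRt] at hK
  simp only [iInf_lt_iff] at hK
  obtain ⟨π, hπ, hπc⟩ := hK
  exact ⟨π, hπ, (ENNReal.mul_lt_mul_iff_left hL0 ofReal_ne_top).1
    ((measure_dist_ge_mul_le_lintegral_log π hδ hδe he).trans_lt hπc)⟩

theorem eq_of_KRt_div_log_tendsto_zero_general (d : ℕ)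
    (μ ν : Measure (Euc d)) (hμp : IsProbabilityMeasure μ) (hνp : IsProbabilityMeasure ν)
    (h : Tendsto (fun δ : ℝ => KRt d δ μ ν / ENNReal.ofReal |Real.log δ|)
      (𝓝[>] (0 : ℝ)) (𝓝 0)) :
    μ = ν := by
  refine eq_of_forall_measure_le_measure_thickening_add μ ν fun e he B hB => ?_
  obtain ⟨δ, hδK, hδ, hδmin⟩ := ((h.eventually_lt_const (ofReal_pos.2 he)).and
    (Ioo_mem_nhdsGT (lt_min (pow_pos he 2) one_pos))).exists
  obtain ⟨π, ⟨-, hπμ, hπν⟩, hπe⟩ := exists_coupling_measure_dist_ge_lt_of_KRt_div_lt hδ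
    (hδmin.trans_le (min_le_right _ _)) (hδmin.le.trans (min_le_left _ _)) he.le hδK
  exact (measure_le_measure_thickening_add_of_map hπμ hπν hB e).trans
    (add_le_add_right hπe.le _)

/-- If `D̃_δ(μ,ν)/|log δ| → 0` as `δ → 0⁺`, then `μ = ν`. -/
theorem eq_of_KRt_div_log_tendsto_zero (d : ℕ) (hd : 1 ≤ d)
    (μ ν : Measure (Euc d)) (hμp : IsProbabilityMeasure μ) (hνp : IsProbabilityMeasure ν)
    (hμ : Plog μ) (hν : Plog ν)
    (h : Tendsto (fun δ : ℝ => KRt d δ μ ν / ENNReal.ofReal |Real.log δ|)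
      (𝓝[>] (0 : ℝ)) (𝓝 0)) :
    μ = ν :=
  eq_of_KRt_div_log_tendsto_zero_general d μ ν hμp hνp h

end
end

section
/- Let d ≥ 1, let μ and (μ_k)_{k≥1} be Borel probability measures on ℝ^d belonging to P_log(ℝ^d), and suppose there exist a sequence δ_k > 0 with δ_k → 0 as k → ∞ and a constant M < ∞ such that D̃_{δ_k}(μ_k, μ) ≤ M for all k. Then μ_k converges weakly to μ as k → ∞ (i.e., ∫ f dμ_k → ∫ f dμ for every bounded continuous f : ℝ^d → ℝ). -/
open MeasureTheory ENNReal Filter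
open scoped Topology

noncomputable section

/-! A coupling of `μ_k` and `μ` whose logarithmic cost is below `M + 1` gives, by Chebyshev,
mass at most `(M + 1) / log (η² / δ_k² + 1)` to `{|x - y| ≥ η}`, and a coupling with little mass
off the `η`-neighbourhood of the diagonal bounds the Lévy–Prokhorov distance. For each fixed `η`
this mass tends to `0` as `δ_k → 0`, so the Lévy–Prokhorov distance between `μ_k` and `μ` tends
to `0`, which implies weak convergence. -/

open Metric

section Coupling

variable {Ω : Type*} [PseudoMetricSpace Ω] [MeasurableSpace Ω] {μ ν : Measure Ω}
  {π : Measure (Ω × Ω)}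

lemma measure_le_measure_thickening_add_of_map_eq (hπμ : π.map Prod.fst = μ)
    (hπν : π.map Prod.snd = ν) (η : ℝ) {B : Set Ω} (hB : MeasurableSet B) :
    μ B ≤ ν (thickening η B) + π {p | η ≤ dist p.1 p.2} := by
  have hcover : Prod.fst ⁻¹' B ⊆ Prod.snd ⁻¹' thickening η B ∪ {p | η ≤ dist p.1 p.2} := by
    intro p hp
    by_cases hfar : η ≤ dist p.1 p.2
    · exact Or.inr hfar
    · exact Or.inl (mem_thickening_iff.mpr ⟨p.1, hp, by rw [dist_comm]; linarith⟩)
  calc μ B = π (Prod.fst ⁻¹' B) := by rw [← hπμ, Measure.map_apply measurable_fst hB]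
    _ ≤ π (Prod.snd ⁻¹' thickening η B) + π {p | η ≤ dist p.1 p.2} :=
      (measure_mono hcover).trans (measure_union_le _ _)
    _ ≤ ν (thickening η B) + π {p | η ≤ dist p.1 p.2} := by
      rw [← hπν]
      gcongr
      exact Measure.le_map_apply measurable_snd.aemeasurable _

lemma levyProkhorovEDist_le_of_map_eq [OpensMeasurableSpace Ω] [IsProbabilityMeasure μ]
    [IsProbabilityMeasure ν]
    (hπμ : π.map Prod.fst = μ) (hπν : π.map Prod.snd = ν) {η : ℝ} (hη : 0 ≤ η) {ε : ℝ≥0∞}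
    (hηε : ENNReal.ofReal η ≤ ε) (hfar : π {p | η ≤ dist p.1 p.2} ≤ ε) :
    levyProkhorovEDist μ ν ≤ ε := by
  refine levyProkhorovEDist_le_of_forall_le μ ν ε fun ε' B hε' hε'_top hB => ?_
  have hηε' : η < ε'.toReal := (ofReal_lt_iff_lt_toReal hη hε'_top.ne).mp (hηε.trans_lt hε')
  calc μ B ≤ ν (thickening η B) + π {p | η ≤ dist p.1 p.2} :=
        measure_le_measure_thickening_add_of_map_eq hπμ hπν η hB
    _ ≤ ν (thickening ε'.toReal B) + ε' := by
      gcongr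
      exact hfar.trans hε'.le

end Coupling

lemma ProbabilityMeasure.tendsto_of_tendsto_levyProkhorovEDist {Ω ι : Type*}
    [PseudoMetricSpace Ω] [MeasurableSpace Ω] [OpensMeasurableSpace Ω] {l : Filter ι}
    {P : ι → ProbabilityMeasure Ω} {P₀ : ProbabilityMeasure Ω}
    (h : Tendsto (fun i => levyProkhorovEDist (P i : Measure Ω) P₀) l (𝓝 0)) :
    Tendsto P l (𝓝 P₀) :=
  (LevyProkhorov.continuous_toMeasure_probabilityMeasure.tendsto (.ofMeasure P₀)).comp
    (f := fun i => LevyProkhorov.ofMeasure (P i)) (tendsto_iff_edist_tendsto_0.mpr h)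

lemma mul_measure_le_dist_le_lintegral_log {E : Type*} [NormedAddCommGroup E] [MeasurableSpace E]
    [OpensMeasurableSpace E] [MeasurableSub₂ E] (π : Measure (E × E)) {δ η : ℝ} (hη : 0 < η) :
    ENNReal.ofReal (Real.log (η ^ 2 / δ ^ 2 + 1)) * π {p | η ≤ dist p.1 p.2} ≤
      ∫⁻ p, ENNReal.ofReal (Real.log (‖p.1 - p.2‖ ^ 2 / δ ^ 2 + 1)) ∂π := by
  refine le_trans ?_
    (mul_meas_ge_le_lintegral₀ (by fun_prop) (ENNReal.ofReal (Real.log (η ^ 2 / δ ^ 2 + 1))))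
  gcongr with p
  intro (hp : η ≤ dist p.1 p.2)
  rw [dist_eq_norm] at hp
  exact ENNReal.ofReal_le_ofReal (Real.log_le_log (by positivity) (by gcongr))

lemma tendsto_log_div_sq_add_one_atTop {ι : Type*} {l : Filter ι} {δ : ι → ℝ}
    (hδ : Tendsto δ l (𝓝[≠] 0)) {η : ℝ} (hη : η ≠ 0) :
    Tendsto (fun i => Real.log (η ^ 2 / δ i ^ 2 + 1)) l atTop := by
  have hnorm : Tendsto (fun i => |η| * ‖δ i‖⁻¹) l atTop :=
    ((tendsto_norm_nhdsNE_zero.comp hδ).inv_tendsto_nhdsGT_zero).const_mul_atTop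
      (abs_pos.mpr hη)
  refine Real.tendsto_log_atTop.comp (tendsto_atTop_add_const_right _ 1 ?_)
  refine ((tendsto_pow_atTop two_ne_zero).comp hnorm).congr fun i => ?_
  simp [mul_pow, div_eq_mul_inv]

lemma tendsto_levyProkhorovEDist_of_KRt_le {d : ℕ} {ι : Type*} {l : Filter ι}
    {μ : ι → Measure (Euc d)} {ν : Measure (Euc d)} [∀ i, IsProbabilityMeasure (μ i)]
    [IsProbabilityMeasure ν] {δ : ι → ℝ} (hδ : Tendsto δ l (𝓝[≠] 0)) {M : ℝ≥0∞} (hM : M ≠ ⊤)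
    (hbound : ∀ i, KRt d (δ i) (μ i) ν ≤ M) :
    Tendsto (fun i => levyProkhorovEDist (μ i) ν) l (𝓝 0) := by
  refine ENNReal.tendsto_nhds_zero.mpr fun ε hε => ?_
  obtain rfl | hε_top := eq_or_ne ε ⊤
  · exact .of_forall fun _ => le_top
  have hη : 0 < ε.toReal := ENNReal.toReal_pos hε.ne' hε_top
  have hcost : Tendsto (fun i => (M + 1) / ENNReal.ofReal (Real.log (ε.toReal ^ 2 / δ i ^ 2 + 1)))
      l (𝓝 0) := by
    simpa using ENNReal.Tendsto.const_div
      (ENNReal.tendsto_ofReal_atTop.comp (tendsto_log_div_sq_add_one_atTop hδ hη.ne'))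
      (Or.inr (by finiteness))
  filter_upwards [hcost.eventually (ge_mem_nhds hε), (tendsto_nhdsWithin_iff.mp hδ).2]
    with i hi hδi
  obtain ⟨π, ⟨_, hπμ, hπν⟩, hπ⟩ : ∃ π ∈ couplings (μ i) ν,
      ∫⁻ p, ENNReal.ofReal (Real.log (‖p.1 - p.2‖ ^ 2 / δ i ^ 2 + 1)) ∂π < M + 1 := by
    simpa only [KRt, iInf_lt_iff, exists_prop] using
      (hbound i).trans_lt (ENNReal.lt_add_right hM one_ne_zero)
  have hthreshold : ENNReal.ofReal (Real.log (ε.toReal ^ 2 / δ i ^ 2 + 1)) ≠ 0 :=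
    (ENNReal.ofReal_pos.mpr (Real.log_pos (lt_add_of_pos_left 1
      (div_pos (by positivity) (pow_two_pos_of_ne_zero hδi))))).ne'
  refine levyProkhorovEDist_le_of_map_eq hπμ hπν hη.le (ofReal_toReal hε_top).le (hi.trans' ?_)
  rw [ENNReal.le_div_iff_mul_le (.inl hthreshold) (.inl ofReal_ne_top), mul_comm]
  exact (mul_measure_le_dist_le_lintegral_log π hη).trans hπ.le

theorem tendsto_integral_of_KRt_bounded_general (d : ℕ)
    (μ : ℕ → Measure (Euc d)) (μlim : Measure (Euc d))
    (hμp : ∀ k, IsProbabilityMeasure (μ k)) (hμlimp : IsProbabilityMeasure μlim)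
    (δ : ℕ → ℝ) (hδpos : ∀ k, 0 < δ k) (hδ : Tendsto δ atTop (𝓝 0))
    (M : ℝ≥0∞) (hM : M < ⊤) (hbound : ∀ k, KRt d (δ k) (μ k) μlim ≤ M) :
    ∀ f : Euc d → ℝ, Continuous f → (∃ B : ℝ, ∀ x, |f x| ≤ B) →
      Tendsto (fun k => ∫ x, f x ∂(μ k)) atTop (𝓝 (∫ x, f x ∂μlim)) := by
  rintro f hf ⟨B, hB⟩
  have hδ_ne : Tendsto δ atTop (𝓝[≠] 0) :=
    tendsto_nhdsWithin_iff.mpr ⟨hδ, .of_forall fun k => (hδpos k).ne'⟩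
  have hLP := tendsto_levyProkhorovEDist_of_KRt_le hδ_ne hM.ne hbound
  have hweak := ProbabilityMeasure.tendsto_of_tendsto_levyProkhorovEDist
    (P := fun k => ⟨μ k, hμp k⟩) (P₀ := ⟨μlim, hμlimp⟩) hLP
  exact ProbabilityMeasure.tendsto_iff_forall_integral_tendsto.mp hweak
    (.ofNormedAddCommGroup f hf B fun x => (Real.norm_eq_abs _).trans_le (hB x))

/-- If `D̃_{δ_k}(μ_k, μ)` is uniformly bounded along a sequence `δ_k → 0`, then
`μ_k` converges weakly to `μ`. -/
theorem tendsto_integral_of_KRt_bounded (d : ℕ) (hd : 1 ≤ d)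
    (μ : ℕ → Measure (Euc d)) (μlim : Measure (Euc d))
    (hμp : ∀ k, IsProbabilityMeasure (μ k)) (hμlimp : IsProbabilityMeasure μlim)
    (hμ : ∀ k, Plog (μ k)) (hμlim : Plog μlim)
    (δ : ℕ → ℝ) (hδpos : ∀ k, 0 < δ k) (hδ : Tendsto δ atTop (𝓝 0))
    (M : ℝ≥0∞) (hM : M < ⊤) (hbound : ∀ k, KRt d (δ k) (μ k) μlim ≤ M) :
    ∀ f : Euc d → ℝ, Continuous f → (∃ B : ℝ, ∀ x, |f x| ≤ B) →
      Tendsto (fun k => ∫ x, f x ∂(μ k)) atTop (𝓝 (∫ x, f x ∂μlim)) :=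
  tendsto_integral_of_KRt_bounded_general d μ μlim hμp hμlimp δ hδpos hδ M hM hbound

end
end

section
/- Let d ≥ 1. There exists a constant C_d > 0, depending only on d, such that for every continuously differentiable function φ : ℝ^d → ℝ whose gradient is locally integrable, and for all x, y ∈ ℝ^d, |φ(x) − φ(y)| ≤ C_d |x − y| ( M|∇φ|(x) + M|∇φ|(y) ), where M denotes the Hardy–Littlewood maximal operator. -/
/-!
Let `r = |x - y|` and `B = B(x, r)`. Averaging the triangle inequality over `z ∈ B` bounds
`|φ(x) - φ(y)| |B|` by `∫_B |φ(z) - φ(x)| + ∫_B |φ(z) - φ(y)|`. For `v ∈ {x, y}` write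
`φ(z) - φ(v)` as the integral of `∇φ` along the segment from `v` to `z` (of length `≤ 2r`) and
swap the integrals: for fixed `t ∈ (0, 1]` the map `z ↦ v + t (z - v)` sends `B ⊆ B(v, 2r)` into
`B(v, 2tr)` and scales volume by `t^d`, so the inner integral is at most
`t^{-d} |B(2tr)| M|∇φ|(v) = 2^d |B(r)| M|∇φ|(v)`, uniformly in `t`.
-/

open MeasureTheory ENNReal Filter
open scoped Topology

noncomputable section

/-- Hardy–Littlewood maximal function
`Mψ(x) = sup_{r>0} |B(r)|⁻¹ ∫_{B(r)} |ψ(x+y)| dy`. -/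
def maximalFn (d : ℕ) (ψ : Euc d → ℝ) (x : Euc d) : ℝ≥0∞ :=
  ⨆ (r : ℝ) (_ : 0 < r),
    (volume (Metric.ball (0 : Euc d) r))⁻¹ *
      ∫⁻ y in Metric.ball (0 : Euc d) r, ENNReal.ofReal |ψ (x + y)|

open Metric Set
open scoped Pointwise

theorem setLIntegral_ball_comp_sub {E : Type*} [NormedAddCommGroup E] [MeasurableSpace E]
    [BorelSpace E] (μ : Measure E) [μ.IsAddRightInvariant]
    (f : E → ℝ≥0∞) (v : E) (ρ : ℝ) :
    ∫⁻ z in ball v ρ, f (z - v) ∂μ = ∫⁻ w in ball 0 ρ, f w ∂μ := by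
  have hpre : (· - v) ⁻¹' ball (0 : E) ρ = ball v ρ := by
    ext z; simp [dist_eq_norm]
  rw [← hpre, (measurePreserving_sub_right μ v).setLIntegral_comp_preimage_emb
    (Homeomorph.subRight v).measurableEmbedding]

theorem setLIntegral_comp_smul_of_pos {E : Type*} [NormedAddCommGroup E] [NormedSpace ℝ E]
    [MeasurableSpace E] [BorelSpace E] [FiniteDimensional ℝ E] (μ : Measure E) [μ.IsAddHaarMeasure]
    (f : E → ℝ≥0∞) (s : Set E) {R : ℝ} (hR : 0 < R) :
    ∫⁻ x in s, f (R • x) ∂μ =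
      ENNReal.ofReal ((R ^ Module.finrank ℝ E)⁻¹) * ∫⁻ x in R • s, f x ∂μ := by
  have hmp : MeasurePreserving (R • ·) μ (ENNReal.ofReal ((R ^ Module.finrank ℝ E)⁻¹) • μ) := by
    refine ⟨measurable_const_smul R, ?_⟩
    rw [Measure.map_addHaar_smul μ hR.ne', abs_of_pos (by positivity)]
  rw [hmp.setLIntegral_comp_emb (Homeomorph.smulOfNeZero R hR.ne').measurableEmbedding,
    image_smul, Measure.restrict_smul, lintegral_smul_measure, smul_eq_mul]

theorem enorm_sub_le_enorm_mul_lintegral_fderiv {E F : Type*} [NormedAddCommGroup E]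
    [NormedSpace ℝ E] [NormedAddCommGroup F] [NormedSpace ℝ F] [CompleteSpace F]
    {φ : E → F} (hφ : ContDiff ℝ 1 φ) (v z : E) :
    ‖φ z - φ v‖ₑ ≤ ‖z - v‖ₑ * ∫⁻ t in Ioc (0 : ℝ) 1, ‖fderiv ℝ φ (v + t • (z - v))‖ₑ := by
  have hderiv (t : ℝ) : HasDerivAt (fun s : ℝ => φ (v + s • (z - v)))
      (fderiv ℝ φ (v + t • (z - v)) (z - v)) t := by
    have hseg : HasDerivAt (fun s : ℝ => v + s • (z - v)) (z - v) t := by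
      simpa using ((hasDerivAt_id t).smul_const (z - v)).const_add v
    exact ((hφ.differentiable one_ne_zero _).hasFDerivAt).comp_hasDerivAt t hseg
  have hcont : Continuous fun t : ℝ => fderiv ℝ φ (v + t • (z - v)) (z - v) :=
    ((hφ.continuous_fderiv one_ne_zero).comp (by fun_prop)).clm_apply continuous_const
  have hftc : φ z - φ v = ∫ t in Ioc (0 : ℝ) 1, fderiv ℝ φ (v + t • (z - v)) (z - v) := by
    rw [← intervalIntegral.integral_of_le zero_le_one,
      intervalIntegral.integral_eq_sub_of_hasDerivAt (fun t _ => hderiv t)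
        (hcont.intervalIntegrable 0 1)]
    simp
  calc ‖φ z - φ v‖ₑ
      ≤ ∫⁻ t in Ioc (0 : ℝ) 1, ‖fderiv ℝ φ (v + t • (z - v)) (z - v)‖ₑ :=
        hftc ▸ enorm_integral_le_lintegral_enorm _
    _ ≤ ∫⁻ t in Ioc (0 : ℝ) 1, ‖fderiv ℝ φ (v + t • (z - v))‖ₑ * ‖z - v‖ₑ :=
        lintegral_mono fun t => ContinuousLinearMap.le_opENorm _ _
    _ = ‖z - v‖ₑ * ∫⁻ t in Ioc (0 : ℝ) 1, ‖fderiv ℝ φ (v + t • (z - v))‖ₑ := by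
        rw [lintegral_mul_const' _ _ enorm_ne_top, mul_comm]

theorem enorm_sub_mul_measure_le_setLIntegral {α F : Type*} [MeasurableSpace α]
    [NormedAddCommGroup F] [MeasurableSpace F] [BorelSpace F] (μ : Measure α) (s : Set α)
    {f : α → F} (hf : Measurable f) (a b : F) :
    ‖a - b‖ₑ * μ s ≤ ∫⁻ z in s, ‖f z - a‖ₑ ∂μ + ∫⁻ z in s, ‖f z - b‖ₑ ∂μ := by
  rw [← setLIntegral_const, ← lintegral_add_left (hf.sub_const a).enorm]
  refine lintegral_mono fun z => ?_
  calc ‖a - b‖ₑ = ‖(f z - b) - (f z - a)‖ₑ := by congr 1; abel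
    _ ≤ ‖f z - b‖ₑ + ‖f z - a‖ₑ := enorm_sub_le
    _ = ‖f z - a‖ₑ + ‖f z - b‖ₑ := add_comm _ _

theorem setLIntegral_ball_zero_le_maximalFn {d : ℕ} (ψ : Euc d → ℝ) (v : Euc d) (s : ℝ) :
    ∫⁻ y in ball (0 : Euc d) s, ‖ψ (v + y)‖ₑ ≤ volume (ball (0 : Euc d) s) * maximalFn d ψ v := by
  rcases le_or_gt s 0 with hs | hs
  · simp [ball_eq_empty.mpr hs]
  rw [← ENNReal.inv_mul_le_iff (measure_ball_pos volume 0 hs).ne' measure_ball_lt_top.ne]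
  simp_rw [Real.enorm_eq_ofReal_abs]
  exact le_iSup₂ (f := fun r (_ : 0 < r) => (volume (ball (0 : Euc d) r))⁻¹ *
    ∫⁻ y in ball (0 : Euc d) r, ENNReal.ofReal |ψ (v + y)|) s hs

theorem setLIntegral_ball_comp_homothety_le_maximalFn {d : ℕ} (ψ : Euc d → ℝ) {v x : Euc d}
    {r t : ℝ} (ht : 0 < t) (hxv : ‖x - v‖ ≤ r) :
    ∫⁻ z in ball x r, ‖ψ (v + t • (z - v))‖ₑ ≤
      2 ^ d * volume (ball (0 : Euc d) r) * maximalFn d ψ v := by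
  have hball : ball x r ⊆ ball v (2 * r) :=
    ball_subset_ball' (by rw [dist_eq_norm]; linarith)
  calc ∫⁻ z in ball x r, ‖ψ (v + t • (z - v))‖ₑ
      ≤ ∫⁻ z in ball v (2 * r), ‖ψ (v + t • (z - v))‖ₑ := lintegral_mono_set hball
    _ = ∫⁻ w in ball 0 (2 * r), ‖ψ (v + t • w)‖ₑ :=
        setLIntegral_ball_comp_sub volume (fun w => ‖ψ (v + t • w)‖ₑ) v _
    _ = ENNReal.ofReal ((t ^ d)⁻¹) * ∫⁻ w in ball 0 (t * (2 * r)), ‖ψ (v + w)‖ₑ := by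
        rw [setLIntegral_comp_smul_of_pos volume (fun w => ‖ψ (v + w)‖ₑ) _ ht,
          _root_.smul_ball ht.ne', smul_zero, Real.norm_of_nonneg ht.le, finrank_euclideanSpace_fin]
    _ ≤ ENNReal.ofReal ((t ^ d)⁻¹) *
          (volume (ball (0 : Euc d) ((2 * t) * r)) * maximalFn d ψ v) := by
        rw [show (2 * t) * r = t * (2 * r) by ring]
        gcongr
        exact setLIntegral_ball_zero_le_maximalFn ψ v _
    _ = 2 ^ d * volume (ball (0 : Euc d) r) * maximalFn d ψ v := by
        rw [Measure.addHaar_ball_mul_of_pos volume _ (by positivity), finrank_euclideanSpace_fin,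
          ← mul_assoc, ← mul_assoc, ← ENNReal.ofReal_mul (by positivity),
          show (t ^ d)⁻¹ * (2 * t) ^ d = 2 ^ d by field_simp; ring,
          ENNReal.ofReal_pow zero_le_two, ENNReal.ofReal_ofNat]

theorem setLIntegral_enorm_sub_le_maximalFn {d : ℕ} {φ : Euc d → ℝ} (hφ : ContDiff ℝ 1 φ)
    {v x : Euc d} {r : ℝ} (hxv : ‖x - v‖ ≤ r) :
    ∫⁻ z in ball x r, ‖φ z - φ v‖ₑ ≤ ENNReal.ofReal (2 * r) *
      (2 ^ d * volume (ball (0 : Euc d) r) * maximalFn d (fun u => ‖fderiv ℝ φ u‖) v) := by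
  set F : Euc d → ℝ → ℝ≥0∞ := fun z t => ‖fderiv ℝ φ (v + t • (z - v))‖ₑ
  have hF : Measurable (Function.uncurry F) :=
    ((hφ.continuous_fderiv one_ne_zero).comp (by fun_prop)).enorm.measurable
  have hzv (z : Euc d) (hz : z ∈ ball x r) : ‖z - v‖ₑ ≤ ENNReal.ofReal (2 * r) := by
    rw [← ofReal_norm]
    refine ENNReal.ofReal_le_ofReal ?_
    calc ‖z - v‖ ≤ ‖z - x‖ + ‖x - v‖ := norm_sub_le_norm_sub_add_norm_sub z x v
      _ ≤ 2 * r := by rw [mem_ball, dist_eq_norm] at hz; linarith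
  calc ∫⁻ z in ball x r, ‖φ z - φ v‖ₑ
      ≤ ∫⁻ z in ball x r, ENNReal.ofReal (2 * r) * ∫⁻ t in Ioc (0 : ℝ) 1, F z t :=
        setLIntegral_mono' measurableSet_ball fun z hz =>
          (enorm_sub_le_enorm_mul_lintegral_fderiv hφ v z).trans (by gcongr; exact hzv z hz)
    _ = ENNReal.ofReal (2 * r) * ∫⁻ t in Ioc (0 : ℝ) 1, ∫⁻ z in ball x r, F z t := by
        rw [lintegral_const_mul' _ _ ofReal_ne_top, lintegral_lintegral_swap hF.aemeasurable]
    _ ≤ ENNReal.ofReal (2 * r) * ∫⁻ _ in Ioc (0 : ℝ) 1,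
          2 ^ d * volume (ball (0 : Euc d) r) * maximalFn d (fun u => ‖fderiv ℝ φ u‖) v := by
        refine mul_le_mul_right (setLIntegral_mono' measurableSet_Ioc fun t ht => ?_) _
        simpa only [F, enorm_norm] using
          setLIntegral_ball_comp_homothety_le_maximalFn (fun u => ‖fderiv ℝ φ u‖) ht.1 hxv
    _ = _ := by rw [setLIntegral_const, Real.volume_Ioc, sub_zero, ENNReal.ofReal_one, mul_one]

theorem abs_sub_le_maximal_fderiv_general (d : ℕ) :
    ∃ C : ℝ, 0 < C ∧
      ∀ φ : Euc d → ℝ, ContDiff ℝ 1 φ →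
        LocallyIntegrable (fun x => fderiv ℝ φ x) volume →
        ∀ x y : Euc d,
          ENNReal.ofReal |φ x - φ y| ≤
            ENNReal.ofReal (C * ‖x - y‖) *
              (maximalFn d (fun u => ‖fderiv ℝ φ u‖) x +
                maximalFn d (fun u => ‖fderiv ℝ φ u‖) y) := by
  refine ⟨2 ^ (d + 1), by positivity, fun φ hφ _ x y => ?_⟩
  rcases eq_or_ne x y with rfl | hxy
  · simp
  have hr : 0 < ‖x - y‖ := norm_pos_iff.mpr (sub_ne_zero.mpr hxy)
  have hC : ENNReal.ofReal (2 ^ (d + 1) * ‖x - y‖) = 2 ^ d * ENNReal.ofReal (2 * ‖x - y‖) := by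
    rw [pow_succ, mul_assoc, ENNReal.ofReal_mul (by positivity), ENNReal.ofReal_pow zero_le_two,
      ENNReal.ofReal_ofNat]
  rw [← Real.enorm_eq_ofReal_abs, hC, ← ENNReal.mul_le_mul_iff_left
    (measure_ball_pos volume (0 : Euc d) hr).ne' measure_ball_lt_top.ne]
  calc ‖φ x - φ y‖ₑ * volume (ball (0 : Euc d) ‖x - y‖)
      ≤ (∫⁻ z in ball x ‖x - y‖, ‖φ z - φ x‖ₑ) + ∫⁻ z in ball x ‖x - y‖, ‖φ z - φ y‖ₑ := by
        rw [← Measure.addHaar_ball_center volume x]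
        exact enorm_sub_mul_measure_le_setLIntegral _ _ hφ.continuous.measurable _ _
    _ ≤ ENNReal.ofReal (2 * ‖x - y‖) * (2 ^ d * volume (ball (0 : Euc d) ‖x - y‖) *
            maximalFn d (fun u => ‖fderiv ℝ φ u‖) x) +
          ENNReal.ofReal (2 * ‖x - y‖) * (2 ^ d * volume (ball (0 : Euc d) ‖x - y‖) *
            maximalFn d (fun u => ‖fderiv ℝ φ u‖) y) :=
        add_le_add (setLIntegral_enorm_sub_le_maximalFn hφ (by simp [hr.le]))
          (setLIntegral_enorm_sub_le_maximalFn hφ le_rfl)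
    _ = _ := by ring

/-- There is a constant `C_d > 0` depending only on `d` such that for every `C¹`
function `φ : ℝ^d → ℝ` with locally integrable gradient and all `x, y`,
`|φ(x) − φ(y)| ≤ C_d |x−y| (M|∇φ|(x) + M|∇φ|(y))`. -/
theorem abs_sub_le_maximal_fderiv (d : ℕ) (hd : 1 ≤ d) :
    ∃ C : ℝ, 0 < C ∧
      ∀ φ : Euc d → ℝ, ContDiff ℝ 1 φ →
        LocallyIntegrable (fun x => fderiv ℝ φ x) volume →
        ∀ x y : Euc d,
          ENNReal.ofReal |φ x - φ y| ≤
            ENNReal.ofReal (C * ‖x - y‖) *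
              (maximalFn d (fun u => ‖fderiv ℝ φ u‖) x +
                maximalFn d (fun u => ‖fderiv ℝ φ u‖) y) :=
  abs_sub_le_maximal_fderiv_general d

end
end
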